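/- arXiv:2307.00317 — 5 statements merged into one kernel-verified Lean document; each statement's English description precedes it below -/
import Mathlib

section
/- For all integers n and k with n ≥ 2k ≥ 2 and every element i ∈ [n], the number of stable k-subsets of [n] that contain i equals C(n-k-1, k-1). -/
/-- A subset `S` of `[n] = {1,...,n}` is stable if it contains no two cyclically
consecutive elements: no `i` with both `i` and `i+1` in `S`, nor both `n` and `1`. -/
def IsStable (n : ℕ) (S : Finset ℕ) : Prop :=
  (∀ i ∈ Finset.Icc 1 n, ¬(i ∈ S ∧ i + 1 ∈ S)) ∧ ¬(n ∈ S ∧ 1 ∈ S)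

instance (n : ℕ) (S : Finset ℕ) : Decidable (IsStable n S) := by
  unfold IsStable; infer_instance

def phi (n i x : ℕ) : ℕ := if i ≤ x then x - i else x + n - i
def psi (n i y : ℕ) : ℕ := if y ≤ n - i then y + i else y - (n - i)

lemma psi_phi (n i x : ℕ) (h1 : 1 ≤ i) (h2 : i ≤ n) (h3 : 1 ≤ x) (h4 : x ≤ n) :
    psi n i (phi n i x) = x := by
  unfold phi psi; split_ifs <;> omega

lemma phi_psi (n i y : ℕ) (h1 : 1 ≤ i) (h2 : i ≤ n) (h4 : y ≤ n - 1) :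
    phi n i (psi n i y) = y := by
  unfold phi psi; split_ifs <;> omega

def Sp' (T : Finset ℕ) : Prop := ∀ x ∈ T, x + 1 ∉ T

instance (T : Finset ℕ) : Decidable (Sp' T) := by unfold Sp'; infer_instance

theorem key (n k i : ℕ) (hk : 1 ≤ k) (hn : 2 * k ≤ n) (hi1 : 1 ≤ i) (hin : i ≤ n) :
    (((Finset.Icc 1 n).powersetCard k).filter (fun S => IsStable n S ∧ i ∈ S)).card
      = (((Finset.Icc 2 (n-2)).powersetCard (k-1)).filter Sp').card := by
  have hn2 : 2 ≤ n := by omega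
  apply Finset.card_nbij' (fun S => (S.erase i).image (phi n i))
      (fun T => insert i (T.image (psi n i)))
  · -- forward membership
    intro S hS
    simp only [Finset.mem_coe, Finset.mem_filter, Finset.mem_powersetCard] at hS
    obtain ⟨⟨hsub, hcard⟩, hst, hiS⟩ := hS
    have hbd : ∀ x ∈ S, 1 ≤ x ∧ x ≤ n := by
      intro x hx
      have := hsub hx
      simpa [Finset.mem_Icc] using this
    -- bounds on phi of elements ≠ i
    have hrange : ∀ x ∈ S.erase i, 2 ≤ phi n i x ∧ phi n i x ≤ n - 2 := by
      intro x hx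
      rw [Finset.mem_erase] at hx
      obtain ⟨hxi, hxS⟩ := hx
      obtain ⟨hx1, hxn⟩ := hbd x hxS
      have hne1 : phi n i x ≠ 1 := by
        intro h
        unfold phi at h
        split_ifs at h with hc
        · -- x = i + 1
          have hx' : x = i + 1 := by omega
          exact hst.1 i (by simp [Finset.mem_Icc]; omega) ⟨hiS, hx' ▸ hxS⟩
        · -- x = 1 ∧ i = n
          have : x = 1 ∧ i = n := by omega
          exact hst.2 ⟨this.2 ▸ hiS, this.1 ▸ hxS⟩
      have hnen : phi n i x ≠ n - 1 := by
        intro h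
        unfold phi at h
        split_ifs at h with hc
        · -- x = n ∧ i = 1
          have : x = n ∧ i = 1 := by omega
          exact hst.2 ⟨this.1 ▸ hxS, this.2 ▸ hiS⟩
        · -- x = i - 1
          have hx' : x + 1 = i := by omega
          exact hst.1 x (by simp [Finset.mem_Icc]; omega) ⟨hxS, hx' ▸ hiS⟩
      have : 1 ≤ phi n i x ∧ phi n i x ≤ n - 1 := by
        unfold phi; split_ifs <;> omega
      omega
    simp only [Finset.mem_coe, Finset.mem_filter, Finset.mem_powersetCard]
    refine ⟨⟨fun y hy => ?_, ?_⟩, ?_⟩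
    · rw [Finset.mem_image] at hy
      obtain ⟨x, hx, rfl⟩ := hy
      simp only [Finset.mem_Icc]
      exact hrange x hx
    · rw [Finset.card_image_of_injOn, Finset.card_erase_of_mem hiS, hcard]
      intro a ha b hb hab
      rw [Finset.mem_coe, Finset.mem_erase] at ha hb
      obtain ⟨ha1, han⟩ := hbd a ha.2
      obtain ⟨hb1, hbn⟩ := hbd b hb.2
      unfold phi at hab
      split_ifs at hab <;> omega
    · -- sparse
      intro y hy hy'
      rw [Finset.mem_image] at hy hy'
      obtain ⟨x, hx, hxy⟩ := hy
      obtain ⟨x', hx', hxy'⟩ := hy'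
      rw [Finset.mem_erase] at hx hx'
      obtain ⟨hx1, hxn⟩ := hbd x hx.2
      obtain ⟨hx'1, hx'n⟩ := hbd x' hx'.2
      have hcases : (x' = x + 1 ∧ x ≤ n) ∨ (x = n ∧ x' = 1) := by
        unfold phi at hxy hxy'
        split_ifs at hxy hxy' <;> omega
      rcases hcases with ⟨rfl, _⟩ | ⟨rfl, rfl⟩
      · exact hst.1 x (by simp [Finset.mem_Icc]; omega) ⟨hx.2, hx'.2⟩
      · exact hst.2 ⟨hx.2, hx'.2⟩
  · -- backward membership
    intro T hT
    simp only [Finset.mem_coe, Finset.mem_filter, Finset.mem_powersetCard] at hT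
    obtain ⟨⟨hsub, hcard⟩, hsp⟩ := hT
    have hbd : ∀ y ∈ T, 2 ≤ y ∧ y ≤ n - 2 := by
      intro y hy
      have := hsub hy
      simpa [Finset.mem_Icc] using this
    have hpsibd : ∀ y ∈ T, 1 ≤ psi n i y ∧ psi n i y ≤ n := by
      intro y hy
      obtain ⟨h2, h3⟩ := hbd y hy
      unfold psi; split_ifs <;> omega
    have hpsi_ne : ∀ y ∈ T, psi n i y ≠ i ∧ psi n i y ≠ i + 1 ∧ (psi n i y + 1 ≠ i) := by
      intro y hy
      obtain ⟨h2, h3⟩ := hbd y hy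
      unfold psi; split_ifs <;> omega
    have hiT : i ∉ T.image (psi n i) := by
      intro h
      rw [Finset.mem_image] at h
      obtain ⟨y, hy, hxy⟩ := h
      exact (hpsi_ne y hy).1 hxy
    simp only [Finset.mem_coe, Finset.mem_filter, Finset.mem_powersetCard]
    refine ⟨⟨fun x hx => ?_, ?_⟩, ?_, Finset.mem_insert_self i _⟩
    · rw [Finset.mem_insert] at hx
      simp only [Finset.mem_Icc]
      rcases hx with rfl | hx
      · omega
      · rw [Finset.mem_image] at hx
        obtain ⟨y, hy, rfl⟩ := hx
        exact hpsibd y hy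
    · rw [Finset.card_insert_of_notMem hiT, Finset.card_image_of_injOn, hcard]
      · omega
      · intro a ha b hb hab
        rw [Finset.mem_coe] at ha hb
        obtain ⟨ha1, han⟩ := hbd a ha
        obtain ⟨hb1, hbn⟩ := hbd b hb
        unfold psi at hab
        split_ifs at hab <;> omega
    · -- stability
      constructor
      · intro x hx ⟨h1, h2⟩
        rw [Finset.mem_insert] at h1 h2
        rcases h1 with rfl | h1
        · rcases h2 with h2 | h2
          · omega
          · rw [Finset.mem_image] at h2
            obtain ⟨y, hy, hxy⟩ := h2
            exact (hpsi_ne y hy).2.1 hxy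
        · rcases h2 with h2 | h2
          · rw [Finset.mem_image] at h1
            obtain ⟨y, hy, hxy⟩ := h1
            exact (hpsi_ne y hy).2.2 (by omega)
          · rw [Finset.mem_image] at h1 h2
            obtain ⟨y, hy, hxy⟩ := h1
            obtain ⟨y', hy', hxy'⟩ := h2
            obtain ⟨hy2, hy3⟩ := hbd y hy
            obtain ⟨hy'2, hy'3⟩ := hbd y' hy'
            have : y' = y + 1 := by
              unfold psi at hxy hxy'
              split_ifs at hxy hxy' <;> omega
            exact hsp y hy (this ▸ hy')
      · rintro ⟨h1, h2⟩
        rw [Finset.mem_insert] at h1 h2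
        rcases h1 with h1 | h1 <;> rcases h2 with h2 | h2
        · omega
        · rw [Finset.mem_image] at h2
          obtain ⟨y, hy, hxy⟩ := h2
          obtain ⟨hy2, hy3⟩ := hbd y hy
          subst h1
          unfold psi at hxy
          split_ifs at hxy <;> omega
        · rw [Finset.mem_image] at h1
          obtain ⟨y, hy, hxy⟩ := h1
          obtain ⟨hy2, hy3⟩ := hbd y hy
          subst h2
          unfold psi at hxy
          split_ifs at hxy <;> omega
        · rw [Finset.mem_image] at h1 h2
          obtain ⟨y, hy, hxy⟩ := h1
          obtain ⟨y', hy', hxy'⟩ := h2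
          obtain ⟨hy2, hy3⟩ := hbd y hy
          obtain ⟨hy'2, hy'3⟩ := hbd y' hy'
          have : y' = y + 1 := by
            unfold psi at hxy hxy'
            split_ifs at hxy hxy' <;> omega
          exact hsp y hy (this ▸ hy')
  · -- left inverse
    intro S hS
    simp only [Finset.mem_coe, Finset.mem_filter, Finset.mem_powersetCard] at hS
    obtain ⟨⟨hsub, hcard⟩, hst, hiS⟩ := hS
    dsimp only
    rw [Finset.image_image]
    have : (S.erase i).image (psi n i ∘ phi n i) = S.erase i := by
      rw [Finset.image_congr (g := id), Finset.image_id]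
      intro x hx
      rw [Finset.mem_coe, Finset.mem_erase] at hx
      have := hsub hx.2
      simp only [Finset.mem_Icc] at this
      exact psi_phi n i x hi1 hin this.1 this.2
    rw [this, Finset.insert_erase hiS]
  · -- right inverse
    intro T hT
    simp only [Finset.mem_coe, Finset.mem_filter, Finset.mem_powersetCard] at hT
    obtain ⟨⟨hsub, hcard⟩, hsp⟩ := hT
    have hiT : i ∉ T.image (psi n i) := by
      intro h
      rw [Finset.mem_image] at h
      obtain ⟨y, hy, hxy⟩ := h
      have := hsub hy
      simp only [Finset.mem_Icc] at this
      revert hxy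
      unfold psi; split_ifs <;> omega
    dsimp only
    rw [Finset.erase_insert hiT, Finset.image_image]
    rw [Finset.image_congr (g := id), Finset.image_id]
    intro y hy
    rw [Finset.mem_coe] at hy
    have := hsub hy
    simp only [Finset.mem_Icc] at this
    exact phi_psi n i y hi1 hin (by omega)

lemma sparse_count (b j : ℕ) :
    (((Finset.Icc 2 b).powersetCard j).filter Sp').card = Nat.choose (b - j) j := by
  induction b using Nat.strong_induction_on generalizing j with
  | _ b ih =>
  match j with
  | 0 =>
    have hsp : Sp' ∅ := fun x hx => absurd hx (Finset.notMem_empty x)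
    simp [Finset.powersetCard_zero, Finset.filter_singleton, hsp]
  | (j' + 1) =>
    by_cases hbj : b ≤ j' + 1
    · -- LHS empty since card (Icc 2 b) = b - 1 < j'+1
      have h1 : (Finset.Icc 2 b).powersetCard (j' + 1) = ∅ := by
        rw [Finset.powersetCard_eq_empty]
        rw [Nat.card_Icc]
        omega
      rw [h1]
      have : b - (j' + 1) = 0 := by omega
      simp [this]
    · by_cases hb2 : b ≤ 2
      · -- then b = 2, j' = 0
        have hb : b = 2 := by omega
        have hj : j' = 0 := by omega
        subst hb; subst hj
        decide
      · -- b ≥ 3, recurrence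
        have hb3 : 3 ≤ b := by omega
        -- split on membership of b
        have hsplit := Finset.card_filter_add_card_filter_not
          (s := ((Finset.Icc 2 b).powersetCard (j' + 1)).filter Sp')
          (p := fun T => b ∈ T)
        have hA1 : ((((Finset.Icc 2 b).powersetCard (j' + 1)).filter Sp').filter
            (fun T => ¬ b ∈ T)).card
            = (((Finset.Icc 2 (b - 1)).powersetCard (j' + 1)).filter Sp').card := by
          congr 1
          ext T
          simp only [Finset.mem_filter, Finset.mem_powersetCard]
          constructor
          · rintro ⟨⟨⟨hsub, hcard⟩, hsp⟩, hnb⟩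
            refine ⟨⟨fun x hx => ?_, hcard⟩, hsp⟩
            have := hsub hx
            simp only [Finset.mem_Icc] at this ⊢
            have : x ≠ b := fun h => hnb (h ▸ hx)
            omega
          · rintro ⟨⟨hsub, hcard⟩, hsp⟩
            have hnb : b ∉ T := by
              intro h
              have := hsub h
              simp only [Finset.mem_Icc] at this
              omega
            refine ⟨⟨⟨fun x hx => ?_, hcard⟩, hsp⟩, hnb⟩
            have := hsub hx
            simp only [Finset.mem_Icc] at this ⊢
            omega
        have hA2 : ((((Finset.Icc 2 b).powersetCard (j' + 1)).filter Sp').filter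
            (fun T => b ∈ T)).card
            = (((Finset.Icc 2 (b - 2)).powersetCard j').filter Sp').card := by
          apply Finset.card_nbij' (fun T => T.erase b) (fun T => insert b T)
          · intro T hT
            simp only [Finset.mem_coe, Finset.mem_filter, Finset.mem_powersetCard] at hT ⊢
            obtain ⟨⟨⟨hsub, hcard⟩, hsp⟩, hbT⟩ := hT
            refine ⟨⟨fun x hx => ?_, ?_⟩, fun x hx hx' => ?_⟩
            · rw [Finset.mem_erase] at hx
              obtain ⟨hxb, hxT⟩ := hx
              have h1 := hsub hxT
              simp only [Finset.mem_Icc] at h1 ⊢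
              have h2 : x ≠ b - 1 := by
                intro h
                apply hsp x hxT
                have : x + 1 = b := by omega
                rw [this]; exact hbT
              omega
            · simp [Finset.card_erase_of_mem hbT, hcard]
            · rw [Finset.mem_erase] at hx hx'
              exact hsp x hx.2 hx'.2
          · intro T hT
            simp only [Finset.mem_coe, Finset.mem_filter, Finset.mem_powersetCard] at hT ⊢
            obtain ⟨⟨hsub, hcard⟩, hsp⟩ := hT
            have hnb : b ∉ T := by
              intro h
              have := hsub h
              simp only [Finset.mem_Icc] at this
              omega
            refine ⟨⟨⟨fun x hx => ?_, ?_⟩, fun x hx hx' => ?_⟩, Finset.mem_insert_self b T⟩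
            · rw [Finset.mem_insert] at hx
              rcases hx with rfl | hx
              · simp only [Finset.mem_Icc]; omega
              · have := hsub hx
                simp only [Finset.mem_Icc] at this ⊢
                omega
            · rw [Finset.card_insert_of_notMem hnb, hcard]
            · rw [Finset.mem_insert] at hx hx'
              rcases hx with rfl | hx
              · rcases hx' with h | h
                · omega
                · have := hsub h
                  simp only [Finset.mem_Icc] at this
                  omega
              · rcases hx' with h | h
                · have := hsub hx
                  simp only [Finset.mem_Icc] at this
                  omega
                · exact hsp x hx h
          · intro T hT
            simp only [Finset.mem_coe, Finset.mem_filter] at hT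
            exact Finset.insert_erase hT.2
          · intro T hT
            simp only [Finset.mem_coe, Finset.mem_filter, Finset.mem_powersetCard] at hT
            apply Finset.erase_insert
            intro h
            have := hT.1.1 h
            simp only [Finset.mem_Icc] at this
            omega
        have e1 := ih (b - 1) (by omega) (j' + 1)
        have e2 := ih (b - 2) (by omega) j'
        rw [hA1, hA2, e1, e2] at hsplit
        rw [← hsplit]
        have h1 : b - 1 - (j' + 1) = b - j' - 2 := by omega
        have h2 : b - 2 - j' = b - j' - 2 := by omega
        have h3 : b - (j' + 1) = (b - j' - 2) + 1 := by omega
        rw [h1, h2, h3, Nat.choose_succ_succ]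

/-- For `n ≥ 2k ≥ 2` and `i ∈ [n]`, the number of stable `k`-subsets of `[n]`
containing `i` equals `C(n-k-1, k-1)`. -/
theorem stmt1 (n k i : ℕ) (hk : 1 ≤ k) (hn : 2 * k ≤ n) (hi : i ∈ Finset.Icc 1 n) :
    (((Finset.Icc 1 n).powersetCard k).filter (fun S => IsStable n S ∧ i ∈ S)).card
      = Nat.choose (n - k - 1) (k - 1) := by
  simp only [Finset.mem_Icc] at hi
  rw [key n k i hk hn hi.1 hi.2, sparse_count]
  congr 1
  omega
end

section
/- Every unstable k-subset of [n] contains an odd element. Consequently, assigning to each unstable k-subset its minimal odd element gives a proper coloring, with at most ⌈n/2⌉ colors, of the graph U(n,k) whose vertices are the unstable k-subsets of [n] and whose edges join disjoint sets. -/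
/-- A subset `A` of `[n] = {1,...,n}` is unstable if it contains two cyclically
consecutive elements: some `i` with `i, i+1 ∈ A`, or both `n` and `1`. -/
def IsUnstable (n : ℕ) (A : Finset ℕ) : Prop :=
  (∃ i, i ∈ A ∧ i + 1 ∈ A) ∨ (n ∈ A ∧ 1 ∈ A)

/-- The minimal odd element of a set (as an infimum in `ℕ`). -/
noncomputable def minOdd (A : Finset ℕ) : ℕ :=
  sInf {x | x ∈ A ∧ Odd x}

theorem IsUnstable.exists_odd {n : ℕ} {A : Finset ℕ} (h : IsUnstable n A) : ∃ x ∈ A, Odd x := by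
  rcases h with ⟨i, hi, hi_succ⟩ | ⟨_, h_one⟩
  · rcases Nat.even_or_odd i with h_even | h_odd
    · exact ⟨i + 1, hi_succ, h_even.add_one⟩
    · exact ⟨i, hi, h_odd⟩
  · exact ⟨1, h_one, odd_one⟩

theorem minOdd_mem_and_odd {A : Finset ℕ} (h : ∃ x ∈ A, Odd x) :
    minOdd A ∈ A ∧ Odd (minOdd A) :=
  let ⟨x, hx, hx_odd⟩ := h
  Nat.sInf_mem (s := {x | x ∈ A ∧ Odd x}) ⟨x, hx, hx_odd⟩

theorem minOdd_ne_of_disjoint {A B : Finset ℕ} (hA : ∃ x ∈ A, Odd x) (hB : ∃ x ∈ B, Odd x)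
    (hAB : Disjoint A B) : minOdd A ≠ minOdd B := fun h =>
  Finset.disjoint_left.1 hAB (minOdd_mem_and_odd hA).1 (h ▸ (minOdd_mem_and_odd hB).1)

theorem Nat.card_filter_odd_Icc_one (n : ℕ) :
    ((Finset.Icc 1 n).filter (fun x => Odd x)).card = (n + 1) / 2 := by
  have h_image : (Finset.Icc 1 n).filter (fun x => Odd x) =
      (Finset.range ((n + 1) / 2)).image (fun i => 2 * i + 1) := by
    ext x
    simp only [Finset.mem_filter, Finset.mem_Icc, Finset.mem_image, Finset.mem_range, Nat.odd_iff]
    constructor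
    · rintro ⟨_, _⟩
      exact ⟨x / 2, by omega, by omega⟩
    · rintro ⟨i, _, rfl⟩
      omega
  rw [h_image, Finset.card_image_of_injective _ (fun a b h => by simpa using h), Finset.card_range]

/-- Every unstable `k`-subset of `[n]` contains an odd element; assigning to each
unstable `k`-subset its minimal odd element yields a proper coloring of the graph
`U(n,k)` (vertices: unstable `k`-subsets; edges: disjoint pairs), using at most
`⌈n/2⌉` colors (the colors lie in the set of odd elements of `[n]`, of size `⌈n/2⌉`). -/
theorem stmt4 (n k : ℕ) :
    (∀ A : Finset ℕ, A ⊆ Finset.Icc 1 n → A.card = k → IsUnstable n A →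
      (∃ x ∈ A, Odd x) ∧ minOdd A ∈ (Finset.Icc 1 n).filter (fun x => Odd x)) ∧
    (∀ A B : Finset ℕ,
      A ⊆ Finset.Icc 1 n → A.card = k → IsUnstable n A →
      B ⊆ Finset.Icc 1 n → B.card = k → IsUnstable n B →
      Disjoint A B → minOdd A ≠ minOdd B) ∧
    ((Finset.Icc 1 n).filter (fun x => Odd x)).card ≤ (n + 1) / 2 := by
  refine ⟨?_, ?_, (Nat.card_filter_odd_Icc_one n).le⟩
  · intro A hA _ hU
    obtain ⟨h_mem, h_odd⟩ := minOdd_mem_and_odd hU.exists_odd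
    exact ⟨hU.exists_odd, Finset.mem_filter.2 ⟨hA h_mem, h_odd⟩⟩
  · intro A B _ _ hUA _ _ hUB hAB
    exact minOdd_ne_of_disjoint hUA.exists_odd hUB.exists_odd hAB
end

section
/- Let k ≥ 1 and let V_1, ..., V_k be a partition of [4k] into k sets each of size 4. Then there exists a partition of [4k] into four stable k-subsets S_1, S_2, S_3, S_4 of [4k] (stable with respect to the cycle on [4k]) such that |S_j ∩ V_i| = 1 for all j ∈ [4] and i ∈ [k]. -/
open Equiv

/-- Selection lemma: a fixed-point-free involution admits a 2-coloring flipping it. -/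
lemma selection {α : Type*} (F : α → α) (hF : Function.Involutive F)
    (hfix : ∀ q, F q ≠ q) : ∃ c : α → Bool, ∀ q, c (F q) ≠ c q := by
  classical
  let s : Setoid α := ⟨fun a b => a = b ∨ a = F b, by
    constructor
    · intro a; exact Or.inl rfl
    · rintro a b (rfl | rfl)
      · exact Or.inl rfl
      · exact Or.inr (hF b).symm
    · rintro a b c (rfl | rfl) (h | h)
      · exact Or.inl h
      · exact Or.inr h
      · exact Or.inr (h ▸ rfl)
      · exact Or.inl (by rw [h, hF]) ⟩
  refine ⟨fun q => decide (q = (Quotient.mk s q).out), fun q => ?_⟩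
  have hmk : (Quotient.mk s (F q)) = Quotient.mk s q := Quotient.sound (Or.inr rfl)
  have hout : s.r (Quotient.mk s q).out q := Quotient.exact ((Quotient.mk s q).out_eq)
  rcases hout with h | h
  · simp [hmk, h, hfix q]
  · have h2 : F q = (Quotient.mk s q).out := h.symm
    have h3 : q ≠ (Quotient.mk s q).out := by
      intro hq; exact hfix q (h2.trans hq.symm)
    have h4 : ¬ q = F q := fun hq => hfix q hq.symm
    simp [hmk, ← h2, h3, h4]

/-- Two fixed-point-free involutive permutations admit a common flipping 2-coloring. -/
lemma keyColor {α : Type*} (f g : Equiv.Perm α) (hf : f * f = 1) (hg : g * g = 1)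
    (hf' : ∀ x, f x ≠ x) (hg' : ∀ x, g x ≠ x) :
    ∃ c : α → Bool, ∀ x, c (f x) ≠ c x ∧ c (g x) ≠ c x := by
  classical
  set σ : Equiv.Perm α := f * g with hσ
  have hfi : f⁻¹ = f := by rw [inv_eq_iff_mul_eq_one]; exact hf
  have hgi : g⁻¹ = g := by rw [inv_eq_iff_mul_eq_one]; exact hg
  have hσi : σ⁻¹ = g * f := by rw [hσ, mul_inv_rev, hfi, hgi]
  have hconjf : ∀ n : ℤ, f * σ ^ n * f = σ ^ (-n) := by
    intro n
    have h1 : f * σ * f⁻¹ = σ⁻¹ := by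
      rw [hfi, hσ, hσi, show f * (f * g) * f = (f * f) * (g * f) by group, hf, one_mul]
    calc f * σ ^ n * f = f * σ ^ n * f⁻¹ := by rw [hfi]
      _ = (f * σ * f⁻¹) ^ n := conj_zpow.symm
      _ = σ ^ (-n) := by rw [h1, zpow_neg, ← inv_zpow]
  have hconjg : ∀ n : ℤ, g * σ ^ n * g = σ ^ (-n) := by
    intro n
    have h1 : g * σ * g⁻¹ = σ⁻¹ := by
      rw [hgi, hσ, hσi, show g * (f * g) * g = (g * f) * (g * g) by group, hg, mul_one]
    calc g * σ ^ n * g = g * σ ^ n * g⁻¹ := by rw [hgi]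
      _ = (g * σ * g⁻¹) ^ n := conj_zpow.symm
      _ = σ ^ (-n) := by rw [h1, zpow_neg, ← inv_zpow]
  have hsf : ∀ (n : ℤ) (y : α), f ((σ ^ n) y) = (σ ^ (-n)) (f y) := by
    intro n y
    have h2 : f * σ ^ n * (f * f) = σ ^ (-n) * f := by rw [← mul_assoc, hconjf n]
    rw [hf, mul_one] at h2
    calc f ((σ ^ n) y) = (f * σ ^ n) y := rfl
      _ = (σ ^ (-n) * f) y := by rw [h2]
      _ = (σ ^ (-n)) (f y) := rfl
  have hsg : ∀ (n : ℤ) (y : α), g ((σ ^ n) y) = (σ ^ (-n)) (g y) := by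
    intro n y
    have h2 : g * σ ^ n * (g * g) = σ ^ (-n) * g := by rw [← mul_assoc, hconjg n]
    rw [hg, mul_one] at h2
    calc g ((σ ^ n) y) = (g * σ ^ n) y := rfl
      _ = (σ ^ (-n) * g) y := by rw [h2]
      _ = (σ ^ (-n)) (g y) := rfl
  have hffx : ∀ x, f (f x) = x := fun x => by
    have := congrArg (fun p : Equiv.Perm α => p x) hf
    simpa using this
  have hggx : ∀ x, g (g x) = x := fun x => by
    have := congrArg (fun p : Equiv.Perm α => p x) hg
    simpa using this
  -- key: f x is not in the σ-cycle of x
  have hkey : ∀ x, ¬ σ.SameCycle x (f x) := by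
    rintro x ⟨n, hn⟩
    rcases Int.even_or_odd n with ⟨m, hm⟩ | ⟨m, hm⟩
    · apply hf' ((σ ^ m) x)
      calc f ((σ ^ m) x) = (σ ^ (-m)) (f x) := hsf m x
        _ = (σ ^ (-m)) ((σ ^ n) x) := by rw [hn]
        _ = (σ ^ (-m + n)) x := by rw [zpow_add]; rfl
        _ = (σ ^ m) x := by rw [hm]; ring_nf
    · -- n = 2*m + 1
      have hgx : (σ ^ (2 * m)) x = g x := by
        have h1 : f x = (σ ^ (2 * m)) (f (g x)) := by
          rw [← hn, hm]
          have : σ ^ (2 * m + 1) = σ ^ (2 * m) * σ := by rw [zpow_add, zpow_one]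
          rw [this]
          rfl
        have h2 : f ((σ ^ (-(2 * m))) (g x)) = (σ ^ (2 * m)) (f (g x)) := by
          rw [hsf (-(2 * m)) (g x), neg_neg]
        rw [← h2] at h1
        have h3 : x = (σ ^ (-(2 * m))) (g x) := f.injective h1
        have h4 := congrArg (σ ^ (2 * m) : Equiv.Perm α) h3
        rw [← Equiv.Perm.mul_apply, ← zpow_add, add_neg_cancel, zpow_zero] at h4
        simpa using h4
      apply hg' ((σ ^ m) x)
      calc g ((σ ^ m) x) = (σ ^ (-m)) (g x) := hsg m x
        _ = (σ ^ (-m)) ((σ ^ (2 * m)) x) := by rw [hgx]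
        _ = (σ ^ (-m + 2 * m)) x := by rw [zpow_add]; rfl
        _ = (σ ^ m) x := by ring_nf
  -- quotient by σ-cycles
  let s2 : Setoid α := ⟨σ.SameCycle, ⟨Equiv.Perm.SameCycle.refl σ,
      fun h => h.symm, fun h h' => h.trans h'⟩⟩
  have hwd : ∀ x y, σ.SameCycle x y → σ.SameCycle (f x) (f y) := by
    rintro x y ⟨n, hn⟩
    exact ⟨-n, by rw [← hn, ← hsf n x]⟩
  let F : Quotient s2 → Quotient s2 := Quotient.map f hwd
  have hFinv : Function.Involutive F := by
    intro q
    induction q using Quotient.ind with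
    | _ x => exact congrArg (Quotient.mk s2) (hffx x)
  have hFfix : ∀ q, F q ≠ q := by
    intro q
    induction q using Quotient.ind with
    | _ x =>
      intro h
      exact hkey x ((Quotient.exact h : σ.SameCycle (f x) x)).symm
  obtain ⟨c₀, hc₀⟩ := selection F hFinv hFfix
  refine ⟨fun x => c₀ (Quotient.mk s2 x), fun x => ?_⟩
  have h1 : c₀ (Quotient.mk s2 (f x)) ≠ c₀ (Quotient.mk s2 x) := hc₀ (Quotient.mk s2 x)
  have h2 : Quotient.mk s2 (g x) = Quotient.mk s2 (f x) := by
    apply Quotient.sound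
    exact ⟨1, by rw [zpow_one]; show σ (g x) = f x; rw [hσ]; show f (g (g x)) = f x; rw [hggx]⟩
  exact ⟨h1, by show c₀ ⟦g x⟧ ≠ c₀ ⟦x⟧; rw [h2]; exact h1⟩

lemma colorFinset (s : Finset ℕ) (f g : ℕ → ℕ)
    (hf : Function.Involutive f) (hg : Function.Involutive g)
    (hfs : ∀ x ∈ s, f x ∈ s ∧ f x ≠ x) (hgs : ∀ x ∈ s, g x ∈ s ∧ g x ≠ x) :
    ∃ c : ℕ → Bool, ∀ x ∈ s, c (f x) ≠ c x ∧ c (g x) ≠ c x := by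
  classical
  let α := {x // x ∈ s}
  let fs : α → α := fun x => ⟨f x.1, (hfs x.1 x.2).1⟩
  let gs : α → α := fun x => ⟨g x.1, (hgs x.1 x.2).1⟩
  have hfsinv : Function.Involutive fs := fun x => Subtype.ext (hf x.1)
  have hgsinv : Function.Involutive gs := fun x => Subtype.ext (hg x.1)
  let f' : Equiv.Perm α := hfsinv.toPerm
  let g' : Equiv.Perm α := hgsinv.toPerm
  have hf1 : f' * f' = 1 := Equiv.ext fun x => hfsinv x
  have hg1 : g' * g' = 1 := Equiv.ext fun x => hgsinv x
  have hf2 : ∀ x : α, f' x ≠ x := fun x hx =>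
    (hfs x.1 x.2).2 (congrArg Subtype.val hx)
  have hg2 : ∀ x : α, g' x ≠ x := fun x hx =>
    (hgs x.1 x.2).2 (congrArg Subtype.val hx)
  obtain ⟨c', hc'⟩ := keyColor f' g' hf1 hg1 hf2 hg2
  refine ⟨fun n => if h : n ∈ s then c' ⟨n, h⟩ else false, fun x hx => ?_⟩
  have hfx : f x ∈ s := (hfs x hx).1
  have hgx : g x ∈ s := (hgs x hx).1
  have h1 := hc' ⟨x, hx⟩
  simp only [dif_pos hx, dif_pos hfx, dif_pos hgx]
  exact ⟨h1.1, h1.2⟩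

lemma halfCard (s : Finset ℕ) (h : ℕ → ℕ) (c : ℕ → Bool)
    (hmaps : ∀ x ∈ s, h x ∈ s ∧ h x ≠ x) (hinv : ∀ x ∈ s, h (h x) = x)
    (hc : ∀ x ∈ s, c (h x) ≠ c x) :
    (s.filter (fun x => c x = true)).card = (s.filter (fun x => c x = false)).card ∧
      s.card = 2 * (s.filter (fun x => c x = true)).card := by
  classical
  have hb : (s.filter (fun x => c x = true)).card = (s.filter (fun x => c x = false)).card := by
    apply Finset.card_bij (fun x _ => h x)
    · intro a ha
      rw [Finset.mem_filter] at ha ⊢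
      have h1 := (hmaps a ha.1).1
      have h2 := hc a ha.1
      refine ⟨h1, ?_⟩
      rw [ha.2] at h2
      exact Bool.not_eq_true _ ▸ (by simpa using h2)
    · intro a ha b hb hab
      rw [Finset.mem_filter] at ha hb
      have := congrArg h hab
      rwa [hinv a ha.1, hinv b hb.1] at this
    · intro b hb
      rw [Finset.mem_filter] at hb
      refine ⟨h b, ?_, hinv b hb.1⟩
      rw [Finset.mem_filter]
      have h1 := (hmaps b hb.1).1
      have h2 := hc b hb.1
      rw [hb.2] at h2
      exact ⟨h1, by simpa using h2⟩
  refine ⟨hb, ?_⟩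
  have := Finset.card_filter_add_card_filter_not (s := s) (p := fun x => c x = true)
  have hneg : s.filter (fun x => ¬ c x = true) = s.filter (fun x => c x = false) := by
    apply Finset.filter_congr
    intro x _
    simp
  rw [hneg] at this
  omega

lemma evenCard (s : Finset ℕ) (h : ℕ → ℕ)
    (hmaps : ∀ x ∈ s, h x ∈ s ∧ h x ≠ x) (hinv : ∀ x ∈ s, h (h x) = x) :
    Even s.card := by
  classical
  have hc : ∀ x ∈ s, (fun x => decide (x < h x)) (h x) ≠ (fun x => decide (x < h x)) x := by
    intro x hx
    simp only [hinv x hx]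
    have hne := (hmaps x hx).2
    intro heq
    have := decide_eq_decide.mp heq
    omega
  obtain ⟨_, h2⟩ := halfCard s h (fun x => decide (x < h x)) hmaps hinv hc
  rw [h2]; exact even_two_mul _

lemma pairUp (s : Finset ℕ) (hev : Even s.card) :
    ∃ f : ℕ → ℕ, Function.Involutive f ∧ (∀ x ∈ s, f x ∈ s ∧ f x ≠ x) ∧
      (∀ x, x ∉ s → f x = x) := by
  classical
  induction s using Finset.strongInduction with
  | _ s ih =>
    by_cases hs : s = ∅
    · exact ⟨id, fun x => rfl, by simp [hs], fun x _ => rfl⟩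
    · obtain ⟨a, ha⟩ := Finset.nonempty_iff_ne_empty.mpr hs
      have hcard2 : 2 ≤ s.card := by
        have h1 : s.card ≠ 0 := by simp [Finset.card_eq_zero, hs]
        rcases hev with ⟨m, hm⟩
        omega
      have hbne : (s.erase a).Nonempty := by
        rw [← Finset.card_pos, Finset.card_erase_of_mem ha]; omega
      obtain ⟨b, hb⟩ := hbne
      have hbs : b ∈ s := Finset.mem_of_mem_erase hb
      have hba : b ≠ a := Finset.ne_of_mem_erase hb
      set s' := (s.erase a).erase b with hs'
      have hsub : s' ⊂ s :=
        Finset.ssubset_of_subset_of_ssubset (Finset.erase_subset _ _) (Finset.erase_ssubset ha)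
      have hcard' : s'.card = s.card - 2 := by
        rw [hs', Finset.card_erase_of_mem hb, Finset.card_erase_of_mem ha]
        omega
      have hev' : Even s'.card := by
        rcases hev with ⟨m, hm⟩
        refine ⟨m - 1, by omega⟩
      obtain ⟨f₀, hf₀inv, hf₀maps, hf₀id⟩ := ih s' hsub hev'
      have has' : a ∉ s' := by simp [hs']
      have hbs' : b ∉ s' := by simp [hs']
      refine ⟨fun x => if x = a then b else if x = b then a else f₀ x, ?_, ?_, ?_⟩
      · intro x
        by_cases hxa : x = a
        · simp [hxa, hba, if_neg hba]
        · by_cases hxb : x = b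
          · subst hxb
            simp [hba]
          · simp only [if_neg hxa, if_neg hxb]
            by_cases hxs : x ∈ s'
            · have h1 := (hf₀maps x hxs).1
              have h2 : f₀ x ≠ a := fun h => has' (h ▸ h1)
              have h3 : f₀ x ≠ b := fun h => hbs' (h ▸ h1)
              simp only [if_neg h2, if_neg h3]
              exact hf₀inv x
            · rw [hf₀id x hxs, if_neg hxa, if_neg hxb, hf₀id x hxs]
      · intro x hx
        by_cases hxa : x = a
        · subst hxa; simp [hba, hbs]
        · by_cases hxb : x = b
          · subst hxb
            simp only [if_neg hxa, if_pos rfl]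
            exact ⟨ha, Ne.symm hba⟩
          · simp only [if_neg hxa, if_neg hxb]
            have hxs : x ∈ s' := by
              simp [hs', Finset.mem_erase, hxa, hxb, hx]
            have := hf₀maps x hxs
            exact ⟨Finset.mem_of_mem_erase (Finset.mem_of_mem_erase (hs' ▸ this.1)), this.2⟩
      · intro x hx
        have hxa : x ≠ a := fun h => hx (h ▸ ha)
        have hxb : x ≠ b := fun h => hx (h ▸ hbs)
        have hxs : x ∉ s' := fun h => hx (Finset.mem_of_mem_erase (Finset.mem_of_mem_erase h))
        simp only [if_neg hxa, if_neg hxb]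
        exact hf₀id x hxs

lemma combinePair {k : ℕ} (W : Fin k → Finset ℕ)
    (hdisj : ∀ i j, i ≠ j → Disjoint (W i) (W j)) (hev : ∀ i, Even (W i).card) :
    ∃ b : ℕ → ℕ, Function.Involutive b ∧ (∀ i, ∀ x ∈ W i, b x ∈ W i ∧ b x ≠ x) := by
  classical
  choose F hFinv hFmaps hFid using fun i => pairUp (W i) (hev i)
  have huniq : ∀ (i j : Fin k) (x : ℕ), x ∈ W i → x ∈ W j → i = j := by
    intro i j x hi hj
    by_contra hne
    exact (Finset.disjoint_left.mp (hdisj i j hne)) hi hj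
  refine ⟨fun x => if h : ∃ i, x ∈ W i then F h.choose x else x, ?_, ?_⟩
  · intro x
    by_cases h : ∃ i, x ∈ W i
    · simp only [dif_pos h]
      set i := h.choose with hi
      have hxi : x ∈ W i := h.choose_spec
      have hFx : F i x ∈ W i := (hFmaps i x hxi).1
      have h2 : ∃ j, F i x ∈ W j := ⟨i, hFx⟩
      simp only [dif_pos (show ∃ j, F h.choose x ∈ W j from h2)]
      have : h2.choose = i := huniq h2.choose i (F i x) h2.choose_spec hFx
      rw [this]
      exact hFinv i x
    · simp only [dif_neg h]
  · intro i x hx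
    have h : ∃ j, x ∈ W j := ⟨i, hx⟩
    simp only [dif_pos h]
    have : h.choose = i := huniq h.choose i x h.choose_spec hx
    rw [this]
    exact hFmaps i x hx



set_option maxHeartbeats 2000000 in
/-- If `V_1, ..., V_k` is a partition of `[4k]` into `k` sets of size `4`, then `[4k]`
can be partitioned into four stable `k`-subsets `S_1, ..., S_4`, each meeting each
`V_i` in exactly one element. -/
theorem stmt12 (k : ℕ) (hk : 1 ≤ k) (V : Fin k → Finset ℕ)
    (hVsub : ∀ i, V i ⊆ Finset.Icc 1 (4 * k))
    (hVdisj : ∀ i j, i ≠ j → Disjoint (V i) (V j))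
    (hVcover : Finset.univ.biUnion V = Finset.Icc 1 (4 * k))
    (hVcard : ∀ i, (V i).card = 4) :
    ∃ S : Fin 4 → Finset ℕ,
      (∀ j, S j ⊆ Finset.Icc 1 (4 * k)) ∧
      (∀ j j', j ≠ j' → Disjoint (S j) (S j')) ∧
      Finset.univ.biUnion S = Finset.Icc 1 (4 * k) ∧
      (∀ j, IsStable (4 * k) (S j)) ∧
      (∀ j, (S j).card = k) ∧
      (∀ j i, (S j ∩ V i).card = 1) := by
  classical
  set N := 4 * k with hN
  have hN4 : 4 ≤ N := by omega
  have hN2 : N % 2 = 0 := by omega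
  set G := Finset.Icc 1 N with hG
  have hmemG : ∀ x, x ∈ G ↔ 1 ≤ x ∧ x ≤ N := fun x => Finset.mem_Icc
  have hGc : G.card = N := by rw [hG, Nat.card_Icc]; omega
  -- odd matching on the cycle
  set a : ℕ → ℕ := fun x => if 1 ≤ x ∧ x ≤ N ∧ x % 2 = 1 then x + 1
    else if 1 ≤ x ∧ x ≤ N ∧ x % 2 = 0 then x - 1 else x with ha_def
  have ha_inv : Function.Involutive a := by
    intro x; simp only [ha_def]; split_ifs <;> omega
  have ha_maps : ∀ x ∈ G, a x ∈ G ∧ a x ≠ x := by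
    intro x hx
    rw [hmemG] at hx
    rw [hmemG]
    simp only [ha_def]; split_ifs <;> omega
  have ha_odd : ∀ x, 1 ≤ x → x ≤ N → x % 2 = 1 → a x = x + 1 := by
    intro x h1 h2 h3; simp only [ha_def]; split_ifs <;> omega
  -- even matching on the cycle
  set e : ℕ → ℕ := fun x => if x = N then 1 else if x = 1 then N
    else if 2 ≤ x ∧ x ≤ N ∧ x % 2 = 0 then x + 1
    else if 2 ≤ x ∧ x ≤ N ∧ x % 2 = 1 then x - 1 else x with he_def
  have he_inv : Function.Involutive e := by
    intro x; simp only [he_def]; split_ifs <;> omega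
  have he_maps : ∀ x ∈ G, e x ∈ G ∧ e x ≠ x := by
    intro x hx
    rw [hmemG] at hx
    rw [hmemG]
    simp only [he_def]; split_ifs <;> omega
  have he_even : ∀ x, x % 2 = 0 → 1 ≤ x → x < N → e x = x + 1 := by
    intro x h1 h2 h3; simp only [he_def]; split_ifs <;> omega
  have he_N : e N = 1 := by simp only [he_def]; simp
  -- matching pairing up each V i
  have hVeven : ∀ i, Even (V i).card := fun i => by rw [hVcard i]; exact ⟨2, rfl⟩
  obtain ⟨b, hb_inv, hb_maps⟩ := combinePair V hVdisj hVeven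
  have hb_mapsG : ∀ x ∈ G, b x ∈ G ∧ b x ≠ x := by
    intro x hx
    have hx' : x ∈ Finset.univ.biUnion V := by rw [hVcover]; exact hx
    rw [Finset.mem_biUnion] at hx'
    obtain ⟨i, _, hxi⟩ := hx'
    have h2 := hb_maps i x hxi
    exact ⟨hVsub i h2.1, h2.2⟩
  -- round 1 coloring
  obtain ⟨c, hc⟩ := colorFinset G a b ha_inv hb_inv ha_maps hb_mapsG
  obtain ⟨hXYeq, hGtot⟩ := halfCard G a c ha_maps (fun x _ => ha_inv x) (fun x hx => (hc x hx).1)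
  set X := G.filter (fun x => c x = true) with hX
  set Y := G.filter (fun x => c x = false) with hY
  have hXG : X ⊆ G := Finset.filter_subset _ _
  have hYG : Y ⊆ G := Finset.filter_subset _ _
  have hXc : X.card = 2 * k := by omega
  have hYc : Y.card = 2 * k := by omega
  have hXa : ∀ x ∈ X, a x ∉ X := by
    intro x hx hax
    rw [hX, Finset.mem_filter] at hx hax
    have := (hc x hx.1).1
    rw [hx.2, hax.2] at this
    exact this rfl
  have hYa : ∀ x ∈ Y, a x ∉ Y := by
    intro x hx hax
    rw [hY, Finset.mem_filter] at hx hax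
    have := (hc x hx.1).1
    rw [hx.2, hax.2] at this
    exact this rfl
  have hXYdisj : Disjoint X Y := by
    rw [Finset.disjoint_left]
    intro x hx hy
    rw [hX, Finset.mem_filter] at hx
    rw [hY, Finset.mem_filter] at hy
    rw [hx.2] at hy
    exact absurd hy.2 (by simp)
  have hXYunion : X ∪ Y = G := by
    ext x
    rw [Finset.mem_union, hX, hY, Finset.mem_filter, Finset.mem_filter]
    constructor
    · rintro (h | h) <;> exact h.1
    · intro h
      cases hcx : c x
      · exact Or.inr ⟨h, rfl⟩
      · exact Or.inl ⟨h, rfl⟩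
  -- cards of V i ∩ X and V i ∩ Y
  have hVfX : ∀ i, (V i).filter (fun x => c x = true) = V i ∩ X := by
    intro i; ext x
    rw [Finset.mem_filter, Finset.mem_inter, hX, Finset.mem_filter]
    exact ⟨fun ⟨h1, h2⟩ => ⟨h1, hVsub i h1, h2⟩, fun ⟨h1, _, h3⟩ => ⟨h1, h3⟩⟩
  have hVfY : ∀ i, (V i).filter (fun x => c x = false) = V i ∩ Y := by
    intro i; ext x
    rw [Finset.mem_filter, Finset.mem_inter, hY, Finset.mem_filter]
    exact ⟨fun ⟨h1, h2⟩ => ⟨h1, hVsub i h1, h2⟩, fun ⟨h1, _, h3⟩ => ⟨h1, h3⟩⟩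
  have hViXY : ∀ i, (V i ∩ X).card = 2 ∧ (V i ∩ Y).card = 2 := by
    intro i
    obtain ⟨heq, htot⟩ := halfCard (V i) b c (hb_maps i) (fun x _ => hb_inv x)
      (fun x hx => (hc x (hVsub i hx)).2)
    rw [hVfX i] at heq htot
    rw [hVfY i] at heq
    have h4 := hVcard i
    omega
  -- round 2 : generic half
  have round2 : ∀ Z : Finset ℕ, Z ⊆ G → Z.card = 2 * k → (∀ x ∈ Z, a x ∉ Z) →
      (∀ i, (V i ∩ Z).card = 2) →
      ∃ T₁ T₂ : Finset ℕ, T₁ ∪ T₂ = Z ∧ Disjoint T₁ T₂ ∧ T₁.card = k ∧ T₂.card = k ∧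
        (∀ i, (T₁ ∩ V i).card = 1) ∧ (∀ i, (T₂ ∩ V i).card = 1) ∧
        (∀ x ∈ T₁, a x ∉ T₁ ∧ e x ∉ T₁) ∧ (∀ x ∈ T₂, a x ∉ T₂ ∧ e x ∉ T₂) := by
    intro Z hZG hZcard hZa hZV
    set M := Z.filter (fun x => e x ∈ Z) with hM
    set Fz := Z.filter (fun x => ¬ e x ∈ Z) with hFz
    have hM_maps : ∀ x ∈ M, e x ∈ M ∧ e x ≠ x := by
      intro x hx
      rw [hM, Finset.mem_filter] at hx
      refine ⟨?_, (he_maps x (hZG hx.1)).2⟩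
      rw [hM, Finset.mem_filter]
      exact ⟨hx.2, by rw [he_inv x]; exact hx.1⟩
    have hMeven : Even M.card := evenCard M e hM_maps (fun x _ => he_inv x)
    have hMFsplit : M.card + Fz.card = Z.card :=
      Finset.card_filter_add_card_filter_not (p := fun x => e x ∈ Z)
    have hFeven : Even Fz.card := by
      obtain ⟨m, hm⟩ := hMeven
      exact ⟨k - m, by omega⟩
    obtain ⟨p, hp_inv, hp_maps, hp_id⟩ := pairUp Fz hFeven
    set a₂ : ℕ → ℕ := fun x => if x ∈ Z then (if e x ∈ Z then e x else p x) else x with ha₂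
    have ha₂_maps : ∀ x ∈ Z, a₂ x ∈ Z ∧ a₂ x ≠ x := by
      intro x hx
      simp only [ha₂, if_pos hx]
      by_cases h : e x ∈ Z
      · rw [if_pos h]; exact ⟨h, (he_maps x (hZG hx)).2⟩
      · rw [if_neg h]
        have hxF : x ∈ Fz := by rw [hFz, Finset.mem_filter]; exact ⟨hx, h⟩
        have h2 := hp_maps x hxF
        rw [hFz, Finset.mem_filter] at h2
        exact ⟨h2.1.1, (hp_maps x hxF).2⟩
    have ha₂_inv : Function.Involutive a₂ := by
      intro x
      by_cases hx : x ∈ Z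
      · by_cases h : e x ∈ Z
        · simp only [ha₂, if_pos hx, if_pos h]
          rw [he_inv x, if_pos hx]
        · have hxF : x ∈ Fz := by rw [hFz, Finset.mem_filter]; exact ⟨hx, h⟩
          have h2 := (hp_maps x hxF).1
          rw [hFz, Finset.mem_filter] at h2
          simp only [ha₂, if_pos hx, if_neg h]
          rw [if_pos h2.1, if_neg h2.2, hp_inv x]
      · simp only [ha₂, if_neg hx]
    -- pairing of V i ∩ Z
    have hViZdisj : ∀ i j, i ≠ j → Disjoint (V i ∩ Z) (V j ∩ Z) := fun i j hij =>
      (hVdisj i j hij).mono Finset.inter_subset_left Finset.inter_subset_left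
    have hViZeven : ∀ i, Even (V i ∩ Z).card := fun i => by rw [hZV i]; exact ⟨1, rfl⟩
    obtain ⟨b₂, hb₂_inv, hb₂_maps⟩ := combinePair (fun i => V i ∩ Z) hViZdisj hViZeven
    have hb₂_mapsZ : ∀ x ∈ Z, b₂ x ∈ Z ∧ b₂ x ≠ x := by
      intro x hx
      have hxG : x ∈ G := hZG hx
      have hx' : x ∈ Finset.univ.biUnion V := by rw [hVcover]; exact hxG
      rw [Finset.mem_biUnion] at hx'
      obtain ⟨i, _, hxi⟩ := hx'
      have h2 := hb₂_maps i x (Finset.mem_inter.mpr ⟨hxi, hx⟩)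
      exact ⟨(Finset.mem_inter.mp h2.1).2, h2.2⟩
    obtain ⟨c₂, hc₂⟩ := colorFinset Z a₂ b₂ ha₂_inv hb₂_inv ha₂_maps hb₂_mapsZ
    obtain ⟨hTeq, hTtot⟩ := halfCard Z b₂ c₂ hb₂_mapsZ (fun x _ => hb₂_inv x)
      (fun x hx => (hc₂ x hx).2)
    refine ⟨Z.filter (fun x => c₂ x = true), Z.filter (fun x => c₂ x = false),
      ?_, ?_, by omega, by omega, ?_, ?_, ?_, ?_⟩
    · ext x
      rw [Finset.mem_union, Finset.mem_filter, Finset.mem_filter]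
      constructor
      · rintro (h | h) <;> exact h.1
      · intro h
        cases hcx : c₂ x
        · exact Or.inr ⟨h, rfl⟩
        · exact Or.inl ⟨h, rfl⟩
    · rw [Finset.disjoint_left]
      intro x hx hy
      rw [Finset.mem_filter] at hx hy
      rw [hx.2] at hy
      exact absurd hy.2 (by simp)
    · -- T₁ ∩ V i card
      intro i
      obtain ⟨heq, htot⟩ := halfCard (V i ∩ Z) b₂ c₂ (hb₂_maps i) (fun x _ => hb₂_inv x)
        (fun x hx => (hc₂ x (Finset.mem_inter.mp hx).2).2)
      have hrw : (V i ∩ Z).filter (fun x => c₂ x = true) = Z.filter (fun x => c₂ x = true) ∩ V i := by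
        ext x
        rw [Finset.mem_filter, Finset.mem_inter, Finset.mem_inter, Finset.mem_filter]
        tauto
      rw [hrw] at htot
      have := hZV i
      omega
    · intro i
      obtain ⟨heq, htot⟩ := halfCard (V i ∩ Z) b₂ c₂ (hb₂_maps i) (fun x _ => hb₂_inv x)
        (fun x hx => (hc₂ x (Finset.mem_inter.mp hx).2).2)
      have hrw : (V i ∩ Z).filter (fun x => c₂ x = false) = Z.filter (fun x => c₂ x = false) ∩ V i := by
        ext x
        rw [Finset.mem_filter, Finset.mem_inter, Finset.mem_inter, Finset.mem_filter]
        tauto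
      rw [hrw] at heq
      have := hZV i
      omega
    · intro x hx
      rw [Finset.mem_filter] at hx
      constructor
      · intro hax
        exact hZa x hx.1 (Finset.mem_of_mem_filter _ hax)
      · intro hex
        rw [Finset.mem_filter] at hex
        have heZ : e x ∈ Z := hex.1
        have ha₂x : a₂ x = e x := by simp only [ha₂, if_pos hx.1, if_pos heZ]
        have := (hc₂ x hx.1).1
        rw [ha₂x, hex.2, hx.2] at this
        exact this rfl
    · intro x hx
      rw [Finset.mem_filter] at hx
      constructor
      · intro hax
        exact hZa x hx.1 (Finset.mem_of_mem_filter _ hax)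
      · intro hex
        rw [Finset.mem_filter] at hex
        have heZ : e x ∈ Z := hex.1
        have ha₂x : a₂ x = e x := by simp only [ha₂, if_pos hx.1, if_pos heZ]
        have := (hc₂ x hx.1).1
        rw [ha₂x, hex.2, hx.2] at this
        exact this rfl
  obtain ⟨S0, S1, hU1, hD1, hc0, hc1, hi0, hi1, hs0, hs1⟩ :=
    round2 X hXG hXc hXa (fun i => (hViXY i).1)
  obtain ⟨S2, S3, hU2, hD2, hc2', hc3, hi2, hi3, hs2, hs3⟩ :=
    round2 Y hYG hYc hYa (fun i => (hViXY i).2)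
  have hS0X : S0 ⊆ X := hU1 ▸ Finset.subset_union_left
  have hS1X : S1 ⊆ X := hU1 ▸ Finset.subset_union_right
  have hS2Y : S2 ⊆ Y := hU2 ▸ Finset.subset_union_left
  have hS3Y : S3 ⊆ Y := hU2 ▸ Finset.subset_union_right
  -- stability
  have stab : ∀ T : Finset ℕ, T ⊆ G → (∀ x ∈ T, a x ∉ T ∧ e x ∉ T) → IsStable N T := by
    intro T hTG hT
    constructor
    · rintro i hi ⟨h1, h2⟩
      rw [← hG, hmemG] at hi
      have hi2 : i + 1 ≤ N := ((hmemG _).mp (hTG h2)).2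
      by_cases hpar : i % 2 = 1
      · have hai : a i = i + 1 := ha_odd i hi.1 hi.2 hpar
        exact (hT i h1).1 (hai ▸ h2)
      · have hpar' : i % 2 = 0 := by omega
        have hei : e i = i + 1 := he_even i hpar' hi.1 (by omega)
        exact (hT i h1).2 (hei ▸ h2)
    · rintro ⟨hN', h1'⟩
      exact (hT N hN').2 (he_N ▸ h1')
  -- disjointness helpers
  have d01 : Disjoint S0 S1 := hD1
  have d23 : Disjoint S2 S3 := hD2
  have d02 : Disjoint S0 S2 := hXYdisj.mono hS0X hS2Y
  have d03 : Disjoint S0 S3 := hXYdisj.mono hS0X hS3Y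
  have d12 : Disjoint S1 S2 := hXYdisj.mono hS1X hS2Y
  have d13 : Disjoint S1 S3 := hXYdisj.mono hS1X hS3Y
  refine ⟨![S0, S1, S2, S3], ?_, ?_, ?_, ?_, ?_, ?_⟩
  · intro j
    fin_cases j
    · exact (hS0X.trans hXG)
    · exact (hS1X.trans hXG)
    · exact (hS2Y.trans hYG)
    · exact (hS3Y.trans hYG)
  · intro j j' hne
    fin_cases j <;> fin_cases j' <;>
      first
        | exact absurd rfl hne
        | exact d01 | exact d01.symm
        | exact d02 | exact d02.symm
        | exact d03 | exact d03.symm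
        | exact d12 | exact d12.symm
        | exact d13 | exact d13.symm
        | exact d23 | exact d23.symm
  · apply Finset.Subset.antisymm
    · intro x hx
      rw [Finset.mem_biUnion] at hx
      obtain ⟨j, _, hj⟩ := hx
      fin_cases j
      · exact hS0X.trans hXG hj
      · exact hS1X.trans hXG hj
      · exact hS2Y.trans hYG hj
      · exact hS3Y.trans hYG hj
    · intro x hx
      rw [Finset.mem_biUnion]
      rw [← hXYunion, Finset.mem_union] at hx
      rcases hx with hx | hx
      · rw [← hU1, Finset.mem_union] at hx
        rcases hx with hx | hx
        · exact ⟨0, Finset.mem_univ _, hx⟩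
        · exact ⟨1, Finset.mem_univ _, hx⟩
      · rw [← hU2, Finset.mem_union] at hx
        rcases hx with hx | hx
        · exact ⟨2, Finset.mem_univ _, hx⟩
        · exact ⟨3, Finset.mem_univ _, hx⟩
  · intro j
    fin_cases j
    · exact stab S0 (hS0X.trans hXG) hs0
    · exact stab S1 (hS1X.trans hXG) hs1
    · exact stab S2 (hS2Y.trans hYG) hs2
    · exact stab S3 (hS3Y.trans hYG) hs3
  · intro j
    fin_cases j
    · exact hc0
    · exact hc1
    · exact hc2'
    · exact hc3
  · intro j i
    fin_cases j
    · exact hi0 i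
    · exact hi1 i
    · exact hi2 i
    · exact hi3 i
end

section
/- Let n ≥ 2k and m = ⌊n/2⌋ − 2k + 1. Given any coloring c of the stable k-subsets of [n] with colors in [m], extend it to a coloring c' of all k-subsets of [n] with colors in [n-2k+1] by: if A is unstable with smallest odd element 2i−1, set c'(A) = i; if A is stable, set c'(A) = c(A) + ⌈n/2⌉. Then c'(A) = c'(B) and A ∩ B = ∅ imply that A and B are both stable and c(A) = c(B). -/
open Finset

theorem exists_odd_mem_of_not_isStable {n : ℕ} {A : Finset ℕ} (h : ¬ IsStable n A) :
    ∃ x ∈ A, Odd x := by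
  by_contra! hodd
  refine h ⟨fun i _ ⟨hi, hi1⟩ => ?_, fun ⟨_, h1⟩ => hodd 1 h1 odd_one⟩
  rcases Nat.even_or_odd i with he | ho
  · exact hodd _ hi1 he.add_one
  · exact hodd _ hi ho

theorem sInf_odd_mem_of_not_isStable {n : ℕ} {A : Finset ℕ} (h : ¬ IsStable n A) :
    sInf {x | x ∈ A ∧ Odd x} ∈ {x | x ∈ A ∧ Odd x} :=
  Nat.sInf_mem (exists_odd_mem_of_not_isStable h)

theorem sInf_odd_succ_div_two_le {n : ℕ} {A : Finset ℕ} (hA : A ⊆ Icc 1 n)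
    (h : ¬ IsStable n A) : (sInf {x | x ∈ A ∧ Odd x} + 1) / 2 ≤ (n + 1) / 2 :=
  Nat.div_le_div_right <| Nat.succ_le_succ (mem_Icc.mp (hA (sInf_odd_mem_of_not_isStable h).1)).2

theorem Nat.eq_of_odd_of_succ_div_two_eq {x y : ℕ} (hx : Odd x) (hy : Odd y)
    (h : (x + 1) / 2 = (y + 1) / 2) : x = y := by
  obtain ⟨a, rfl⟩ := hx
  obtain ⟨b, rfl⟩ := hy
  omega

theorem stmt16_general (n k m : ℕ)
    (c : Finset ℕ → ℕ)
    (hc : ∀ A : Finset ℕ, A ⊆ Finset.Icc 1 n → A.card = k → IsStable n A →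
      c A ∈ Finset.Icc 1 m)
    (c' : Finset ℕ → ℕ)
    (hc'stable : ∀ A : Finset ℕ, IsStable n A → c' A = c A + (n + 1) / 2)
    (hc'unstable : ∀ A : Finset ℕ, ¬ IsStable n A →
      c' A = (sInf {x | x ∈ A ∧ Odd x} + 1) / 2) :
    ∀ A B : Finset ℕ, A ⊆ Finset.Icc 1 n → A.card = k →
      B ⊆ Finset.Icc 1 n → B.card = k →
      c' A = c' B → Disjoint A B →
      IsStable n A ∧ IsStable n B ∧ c A = c B := by
  intro A B hAsub hAcard hBsub hBcard hcc hdisj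
  have stable_large : ∀ S ⊆ Icc 1 n, S.card = k → IsStable n S → (n + 1) / 2 < c' S :=
    fun S hS hk hst => by
      have := (mem_Icc.mp (hc S hS hk hst)).1
      rw [hc'stable S hst]
      omega
  have unstable_small : ∀ S ⊆ Icc 1 n, ¬ IsStable n S → c' S ≤ (n + 1) / 2 :=
    fun S hS hst => (hc'unstable S hst).trans_le (sInf_odd_succ_div_two_le hS hst)
  by_cases hA : IsStable n A <;> by_cases hB : IsStable n B
  · refine ⟨hA, hB, ?_⟩
    rw [hc'stable A hA, hc'stable B hB] at hcc
    omega
  · exact absurd hcc (unstable_small B hBsub hB |>.trans_lt (stable_large A hAsub hAcard hA)).ne'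
  · exact absurd hcc (unstable_small A hAsub hA |>.trans_lt (stable_large B hBsub hBcard hB)).ne
  · obtain ⟨hxA, hxodd⟩ := sInf_odd_mem_of_not_isStable hA
    obtain ⟨hyB, hyodd⟩ := sInf_odd_mem_of_not_isStable hB
    rw [hc'unstable A hA, hc'unstable B hB] at hcc
    rw [Nat.eq_of_odd_of_succ_div_two_eq hxodd hyodd hcc] at hxA
    exact (disjoint_left.mp hdisj hxA hyB).elim

/-- Let `m = ⌊n/2⌋ − 2k + 1` and let `c` color the stable `k`-subsets of `[n]` with
colors in `[m]`. Extend `c` to `c'` on all `k`-subsets by: if `A` is unstable with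
smallest odd element `2i−1`, set `c'(A) = i`; if `A` is stable, `c'(A) = c(A) + ⌈n/2⌉`.
Then `c'(A) = c'(B)` and `A ∩ B = ∅` imply that `A, B` are stable and `c(A) = c(B)`. -/
theorem stmt16 (n k m : ℕ) (hn : 2 * k ≤ n) (hm : m = n / 2 - 2 * k + 1)
    (c : Finset ℕ → ℕ)
    (hc : ∀ A : Finset ℕ, A ⊆ Finset.Icc 1 n → A.card = k → IsStable n A →
      c A ∈ Finset.Icc 1 m)
    (c' : Finset ℕ → ℕ)
    (hc'stable : ∀ A : Finset ℕ, IsStable n A → c' A = c A + (n + 1) / 2)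
    (hc'unstable : ∀ A : Finset ℕ, ¬ IsStable n A →
      c' A = (sInf {x | x ∈ A ∧ Odd x} + 1) / 2) :
    ∀ A B : Finset ℕ, A ⊆ Finset.Icc 1 n → A.card = k →
      B ⊆ Finset.Icc 1 n → B.card = k →
      c' A = c' B → Disjoint A B →
      IsStable n A ∧ IsStable n B ∧ c A = c B :=
  stmt16_general n k m c hc c' hc'stable hc'unstable
end

section
/- Let n ≥ 68k, p = 2k/n, and let V_1, ..., V_ℓ ⊆ [n] with ℓ ≤ n and |V_i| = r_i ≥ 2 for all i. If A is a random subset of [n] including each element independently with probability p, A' is obtained from A by removing every j with {j, j+1 (mod n)} ⊆ A, and A'' is obtained from A' by removing, for each i with |A' ∩ V_i| > r_i/2, exactly |A' ∩ V_i| − ⌊r_i/2⌋ elements of V_i, then E[|A''|] ≥ (p − 17p²)·n ≥ k. -/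
/-!
Linearity of expectation. An element `j` is removed in step 2 exactly when `{j, j + 1} ⊆ A`,
an event of probability `p²`, so `E|A'| = (p - p²) n`. Step 3 removes `|A' ∩ V_i| - ⌊r_i/2⌋ ≤
|A ∩ V_i| - ⌊r_i/2⌋` elements of `V_i`, which is at most the number of `(⌊r_i/2⌋ + 1)`-subsets
of `V_i` contained in `A`; its expectation is at most `C(r_i, ⌊r_i/2⌋ + 1) p^(⌊r_i/2⌋ + 1) ≤ (4p)²`
as `r_i ≥ 2` and `p ≤ 1/4`. With `ℓ ≤ n` this gives `E|A''| ≥ (p - 17p²) n`, and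
`p = 2k/n ≤ 1/34` gives `(p - 17p²) n = 2k - 34pk ≥ k`.
-/

open Finset

theorem Nat.sub_le_choose_succ (m t : ℕ) : m - t ≤ m.choose (t + 1) := by
  induction m with
  | zero => simp
  | succ m ih =>
    rw [Nat.choose_succ_succ']
    rcases le_or_gt t m with h | h
    · have := Nat.choose_pos h
      omega
    · omega

theorem Nat.choose_div_two_succ_mul_pow_le {r : ℕ} (hr : 2 ≤ r) {p : ℝ} (hp₀ : 0 ≤ p)
    (hp : p ≤ 1 / 4) : r.choose (r / 2 + 1) * p ^ (r / 2 + 1) ≤ (4 * p) ^ 2 := by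
  have hchoose : (r.choose (r / 2 + 1) : ℝ) ≤ 4 ^ (r / 2 + 1) := by
    calc (r.choose (r / 2 + 1) : ℝ) ≤ 2 ^ r := by exact_mod_cast r.choose_le_two_pow _
      _ ≤ 2 ^ (2 * (r / 2 + 1)) := pow_le_pow_right₀ (by norm_num) (by omega)
      _ = 4 ^ (r / 2 + 1) := by rw [pow_mul]; norm_num
  calc r.choose (r / 2 + 1) * p ^ (r / 2 + 1) ≤ 4 ^ (r / 2 + 1) * p ^ (r / 2 + 1) := by gcongr
    _ = (4 * p) ^ (r / 2 + 1) := (mul_pow _ _ _).symm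
    _ ≤ (4 * p) ^ 2 := pow_le_pow_of_le_one (by positivity) (by linarith) (by omega)

theorem Finset.card_inter_sub_le_card_filter_powersetCard {α : Type*} [DecidableEq α]
    (A V : Finset α) (t : ℕ) : #(A ∩ V) - t ≤ #{S ∈ powersetCard (t + 1) V | S ⊆ A} := by
  calc #(A ∩ V) - t ≤ #(powersetCard (t + 1) (A ∩ V)) := by
        rw [card_powersetCard]; exact Nat.sub_le_choose_succ _ _
    _ ≤ #{S ∈ powersetCard (t + 1) V | S ⊆ A} := card_le_card fun S hS => by
        rw [mem_powersetCard, subset_inter_iff] at hS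
        exact mem_filter.2 ⟨mem_powersetCard.2 ⟨hS.1.2, hS.2⟩, hS.1.1⟩

theorem Finset.card_sub_sum_card_le_card_sdiff_biUnion {α ι : Type*} [DecidableEq α]
    (s : Finset α) (I : Finset ι) (t : ι → Finset α) :
    (#s : ℝ) - ∑ i ∈ I, (#(t i) : ℝ) ≤ #(s \ I.biUnion t) := by
  have h₁ : (#s : ℝ) ≤ #(s \ I.biUnion t) + #(I.biUnion t) := by
    exact_mod_cast card_le_card_sdiff_add_card
  have h₂ : (#(I.biUnion t) : ℝ) ≤ ∑ i ∈ I, (#(t i) : ℝ) := by exact_mod_cast card_biUnion_le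
  linarith

theorem le_one_div_34_of_eq_two_mul_div {n k : ℕ} (hn : 68 * k ≤ n) {p : ℝ}
    (hp : p = 2 * k / n) : p ≤ 1 / 34 := by
  have hn' : (68 * k : ℝ) ≤ n := by exact_mod_cast hn
  rw [hp]
  exact div_le_of_le_mul₀ (by positivity) (by norm_num) (by linarith)

theorem le_sub_mul_sq_mul_of_eq_two_mul_div {n k : ℕ} (hn : 68 * k ≤ n) {p : ℝ}
    (hp : p = 2 * k / n) : (k : ℝ) ≤ (p - 17 * p ^ 2) * n := by
  have hpn : p * n = 2 * k := by
    rcases n.eq_zero_or_pos with rfl | hn₀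
    · obtain rfl : k = 0 := by omega
      simp
    · rw [hp]; field_simp
  have hp₁ := le_one_div_34_of_eq_two_mul_div hn hp
  nlinarith [mul_le_mul_of_nonneg_right hp₁ (Nat.cast_nonneg (α := ℝ) k)]

noncomputable def randomSubsetExpectation {α : Type*} (Ω : Finset α) (p : ℝ)
    (f : Finset α → ℝ) : ℝ :=
  ∑ A ∈ Ω.powerset, p ^ #A * (1 - p) ^ (#Ω - #A) * f A

namespace randomSubsetExpectation

variable {α ι : Type*} {Ω : Finset α} {p : ℝ} {f g : Finset α → ℝ}

theorem congr_of_subset (h : ∀ A ⊆ Ω, f A = g A) :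
    randomSubsetExpectation Ω p f = randomSubsetExpectation Ω p g :=
  sum_congr rfl fun A hA => by rw [h A (mem_powerset.1 hA)]

theorem sub : randomSubsetExpectation Ω p (fun A => f A - g A) =
    randomSubsetExpectation Ω p f - randomSubsetExpectation Ω p g := by
  simp only [randomSubsetExpectation, mul_sub, sum_sub_distrib]

theorem sum (s : Finset ι) (F : ι → Finset α → ℝ) :
    randomSubsetExpectation Ω p (fun A => ∑ i ∈ s, F i A) =
      ∑ i ∈ s, randomSubsetExpectation Ω p (F i) := by
  simp only [randomSubsetExpectation, mul_sum]
  exact sum_comm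

theorem mono (hp₀ : 0 ≤ p) (hp₁ : p ≤ 1) (h : ∀ A ⊆ Ω, f A ≤ g A) :
    randomSubsetExpectation Ω p f ≤ randomSubsetExpectation Ω p g :=
  sum_le_sum fun A hA => mul_le_mul_of_nonneg_left (h A (mem_powerset.1 hA))
    (mul_nonneg (pow_nonneg hp₀ _) (pow_nonneg (sub_nonneg.2 hp₁) _))

variable [DecidableEq α]

/-- Writing the weight of `A` as `∏_{i ∈ A} p · ∏_{i ∈ Ω \ A} (1 - p)`, the indicator of `S ⊆ A`
kills the factors `1 - p` with `i ∈ S`, and the sum over `A` factorises by `Finset.prod_add`. -/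
theorem indicator_subset {S : Finset α} (hS : S ⊆ Ω) :
    randomSubsetExpectation Ω p (fun A => if S ⊆ A then 1 else 0) = p ^ #S := by
  have hweight : ∀ A ∈ Ω.powerset, p ^ #A * (1 - p) ^ (#Ω - #A) * (if S ⊆ A then 1 else 0)
      = (∏ _i ∈ A, p) * ∏ i ∈ Ω \ A, (if i ∉ S then 1 - p else 0) := by
    intro A hA
    have hmiss : (∀ i ∈ Ω \ A, i ∉ S) ↔ S ⊆ A :=
      ⟨fun h i hi => by_contra fun hiA => h i (mem_sdiff.2 ⟨hS hi, hiA⟩) hi,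
        fun h i hi hiS => (mem_sdiff.1 hi).2 (h hiS)⟩
    rw [prod_const, prod_ite_zero, prod_const, card_sdiff_of_subset (mem_powerset.1 hA),
      if_congr hmiss rfl rfl]
    simp only [mul_ite, mul_one, mul_zero]
  rw [randomSubsetExpectation, sum_congr rfl hweight, ← prod_add]
  calc ∏ i ∈ Ω, (p + if i ∉ S then 1 - p else 0) = ∏ i ∈ Ω, if i ∈ S then p else 1 :=
        prod_congr rfl fun i _ => by split_ifs <;> ring
    _ = p ^ #S := by rw [prod_ite_mem, inter_eq_right.2 hS, prod_const]

theorem card_filter_subset (S : α → Finset α) (hSΩ : ∀ j ∈ Ω, S j ⊆ Ω)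
    (hmem : ∀ j ∈ Ω, j ∈ S j) :
    randomSubsetExpectation Ω p (fun A => (#{j ∈ A | S j ⊆ A} : ℝ)) =
      ∑ j ∈ Ω, p ^ #(S j) := by
  have hcount : ∀ A ⊆ Ω, (#{j ∈ A | S j ⊆ A} : ℝ) = ∑ j ∈ Ω, if S j ⊆ A then 1 else 0 := by
    intro A hA
    rw [sum_boole, filter_congr_decidable]
    congr 2
    ext j
    simp only [mem_filter]
    exact ⟨fun h => ⟨hA h.1, h.2⟩, fun h => ⟨h.2 (hmem j h.1), h.2⟩⟩
  rw [congr_of_subset hcount, sum]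
  exact sum_congr rfl fun j hj => indicator_subset (hSΩ j hj)

theorem card : randomSubsetExpectation Ω p (fun A => (#A : ℝ)) = p * #Ω := by
  have h := card_filter_subset (Ω := Ω) (p := p) (fun j => {j})
    (fun j hj => singleton_subset_iff.2 hj) (fun j _ => mem_singleton_self j)
  simp only [singleton_subset_iff, filter_true_of_mem (fun _ h => h), card_singleton, pow_one,
    sum_const, nsmul_eq_mul] at h
  rw [h, mul_comm]

theorem card_filter_mem (σ : α → α) (hσΩ : ∀ j ∈ Ω, σ j ∈ Ω) (hσ : ∀ j ∈ Ω, σ j ≠ j) :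
    randomSubsetExpectation Ω p (fun A => (#{j ∈ A | σ j ∈ A} : ℝ)) = p ^ 2 * #Ω := by
  have h := card_filter_subset (Ω := Ω) (p := p) (fun j => {j, σ j})
    (fun j hj => insert_subset hj (singleton_subset_iff.2 (hσΩ j hj)))
    (fun j _ => mem_insert_self j _)
  rw [sum_congr rfl fun j hj => by rw [card_pair (hσ j hj).symm], sum_const, nsmul_eq_mul,
    mul_comm] at h
  rw [← h]
  refine congr_of_subset fun A _ => ?_
  congr 2
  exact filter_congr fun j hj => by simp [insert_subset_iff, hj]

theorem card_filter_not_mem (σ : α → α) (hσΩ : ∀ j ∈ Ω, σ j ∈ Ω) (hσ : ∀ j ∈ Ω, σ j ≠ j) :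
    randomSubsetExpectation Ω p (fun A => (#{j ∈ A | σ j ∉ A} : ℝ)) = (p - p ^ 2) * #Ω := by
  have hsplit : ∀ A : Finset α, (#{j ∈ A | σ j ∉ A} : ℝ) = #A - #{j ∈ A | σ j ∈ A} := by
    intro A
    rw [eq_sub_iff_add_eq, add_comm]
    exact_mod_cast card_filter_add_card_filter_not (fun j => σ j ∈ A)
  rw [congr_of_subset fun A _ => hsplit A, sub, card, card_filter_mem σ hσΩ hσ]
  ring

theorem card_filter_cyclic_succ_not_mem {n : ℕ} (hn : 2 ≤ n) :
    randomSubsetExpectation (Icc 1 n) p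
      (fun A => (#{j ∈ A | (if j = n then 1 else j + 1) ∉ A} : ℝ)) = (p - p ^ 2) * n := by
  rw [card_filter_not_mem, Nat.card_Icc, add_tsub_cancel_right]
  · intro j hj
    simp only [mem_Icc] at hj ⊢
    split_ifs <;> omega
  · intro j hj
    simp only [mem_Icc] at hj
    split_ifs <;> omega

theorem card_inter_sub_le (hp₀ : 0 ≤ p) (hp₁ : p ≤ 1) {V : Finset α} (hV : V ⊆ Ω) (t : ℕ) :
    randomSubsetExpectation Ω p (fun A => ((#(A ∩ V) - t : ℕ) : ℝ)) ≤
      (#V).choose (t + 1) * p ^ (t + 1) := by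
  calc randomSubsetExpectation Ω p (fun A => ((#(A ∩ V) - t : ℕ) : ℝ))
      ≤ randomSubsetExpectation Ω p
          (fun A => ∑ S ∈ powersetCard (t + 1) V, if S ⊆ A then 1 else 0) :=
        mono hp₀ hp₁ fun A _ => by
          rw [sum_boole]; exact_mod_cast card_inter_sub_le_card_filter_powersetCard A V t
    _ = ∑ S ∈ powersetCard (t + 1) V, p ^ #S := by
        rw [sum]
        exact sum_congr rfl fun S hS => indicator_subset ((mem_powersetCard.1 hS).1.trans hV)
    _ = (#V).choose (t + 1) * p ^ (t + 1) := by
        rw [sum_congr rfl fun S hS => by rw [(mem_powersetCard.1 hS).2], sum_const,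
          card_powersetCard, nsmul_eq_mul]

theorem le_sq_of_le_card_inter_sub_half (hp₀ : 0 ≤ p) (hp : p ≤ 1 / 4) {V : Finset α}
    (hV : V ⊆ Ω) (hV₂ : 2 ≤ #V) {f : Finset α → ℕ} (hf : ∀ A ⊆ Ω, f A ≤ #(A ∩ V) - #V / 2) :
    randomSubsetExpectation Ω p (fun A => (f A : ℝ)) ≤ (4 * p) ^ 2 :=
  calc randomSubsetExpectation Ω p (fun A => (f A : ℝ))
      ≤ randomSubsetExpectation Ω p (fun A => ((#(A ∩ V) - #V / 2 : ℕ) : ℝ)) :=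
        mono hp₀ (by linarith) fun A hA => by exact_mod_cast hf A hA
    _ ≤ _ := card_inter_sub_le hp₀ (by linarith) hV _
    _ ≤ (4 * p) ^ 2 := Nat.choose_div_two_succ_mul_pow_le hV₂ hp₀ hp

theorem sub_sum_le_card_sdiff_biUnion (hp₀ : 0 ≤ p) (hp₁ : p ≤ 1) (s : Finset α → Finset α)
    (I : Finset ι) (t : Finset α → ι → Finset α) :
    randomSubsetExpectation Ω p (fun A => (#(s A) : ℝ)) -
        ∑ i ∈ I, randomSubsetExpectation Ω p (fun A => (#(t A i) : ℝ)) ≤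
      randomSubsetExpectation Ω p (fun A => (#(s A \ I.biUnion (t A)) : ℝ)) := by
  rw [← sum, ← sub]
  exact mono hp₀ hp₁ fun A _ => card_sub_sum_card_le_card_sdiff_biUnion _ _ _

end randomSubsetExpectation

open randomSubsetExpectation in
theorem stmt19_general (n k ℓ : ℕ) (hn : 68 * k ≤ n) (hℓ : ℓ ≤ n)
    (V : Fin ℓ → Finset ℕ) (hV : ∀ i, V i ⊆ Finset.Icc 1 n)
    (hV2 : ∀ i, 2 ≤ (V i).card)
    (p : ℝ) (hp : p = 2 * k / n)
    (A' : Finset ℕ → Finset ℕ)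
    (hA' : ∀ A : Finset ℕ,
      A' A = A.filter (fun j => ¬ ((if j = n then 1 else j + 1) ∈ A)))
    (R : Finset ℕ → Fin ℓ → Finset ℕ)
    (hR2 : ∀ A i, (R A i).card = (A' A ∩ V i).card - (V i).card / 2)
    (A'' : Finset ℕ → Finset ℕ)
    (hA'' : ∀ A : Finset ℕ, A'' A = A' A \ Finset.univ.biUnion (R A)) :
    (k : ℝ) ≤ (p - 17 * p ^ 2) * n ∧
    (p - 17 * p ^ 2) * n ≤
      ∑ A ∈ (Finset.Icc 1 n).powerset,
        p ^ A.card * (1 - p) ^ (n - A.card) * ((A'' A).card : ℝ) := by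
  refine ⟨le_sub_mul_sq_mul_of_eq_two_mul_div hn hp, ?_⟩
  obtain rfl | hk₀ := k.eq_zero_or_pos
  · obtain rfl : p = 0 := by simp [hp]
    norm_num
    exact sum_nonneg fun A _ => by positivity
  have hp₀ : 0 ≤ p := by rw [hp]; positivity
  have hp₁ := le_one_div_34_of_eq_two_mul_div hn hp
  have hA'E :
      randomSubsetExpectation (Icc 1 n) p (fun A => (#(A' A) : ℝ)) = (p - p ^ 2) * n := by
    simp only [hA']
    exact card_filter_cyclic_succ_not_mem (by omega)
  have hRE : ∀ i, randomSubsetExpectation (Icc 1 n) p (fun A => (#(R A i) : ℝ)) ≤ (4 * p) ^ 2 :=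
    fun i => le_sq_of_le_card_inter_sub_half hp₀ (by linarith) (hV i) (hV2 i) fun A _ => by
      rw [hR2, hA']
      gcongr
      exact filter_subset _ _
  have hℓ' : (ℓ : ℝ) ≤ n := by exact_mod_cast hℓ
  calc (p - 17 * p ^ 2) * n
      ≤ randomSubsetExpectation (Icc 1 n) p (fun A => (#(A' A) : ℝ)) -
          ∑ _i : Fin ℓ, (4 * p) ^ 2 := by
        simp only [hA'E, sum_const, card_univ, Fintype.card_fin, nsmul_eq_mul]
        nlinarith
    _ ≤ randomSubsetExpectation (Icc 1 n) p (fun A => (#(A' A) : ℝ)) -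
          ∑ i, randomSubsetExpectation (Icc 1 n) p (fun A => (#(R A i) : ℝ)) := by
        gcongr with i; exact hRE i
    _ ≤ randomSubsetExpectation (Icc 1 n) p (fun A => (#(A'' A) : ℝ)) := by
        simp only [hA'']
        exact sub_sum_le_card_sdiff_biUnion hp₀ (by linarith) _ _ _
    _ = _ := by simp [randomSubsetExpectation]

/-- Let `n ≥ 68k`, `p = 2k/n`, and `V_1, ..., V_ℓ ⊆ [n]` with `ℓ ≤ n` and
`|V_i| = r_i ≥ 2`. A random subset `A` of `[n]` includes each element independently
with probability `p`; `A'` removes from `A` every `j` whose cyclic successor is also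
in `A`; `A''` removes from `A'`, for each `i`, exactly `|A' ∩ V_i| − ⌊r_i/2⌋` elements
of `A' ∩ V_i` whenever `|A' ∩ V_i| > r_i/2` (the sets `R A i` of removed elements).
Then `E[|A''|] ≥ (p − 17p²)·n ≥ k`, where the expectation is written out as a weighted
sum over all subsets of `[n]`. -/
theorem stmt19 (n k ℓ : ℕ) (hn : 68 * k ≤ n) (hℓ : ℓ ≤ n)
    (V : Fin ℓ → Finset ℕ) (hV : ∀ i, V i ⊆ Finset.Icc 1 n)
    (hV2 : ∀ i, 2 ≤ (V i).card)
    (p : ℝ) (hp : p = 2 * k / n)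
    (A' : Finset ℕ → Finset ℕ)
    (hA' : ∀ A : Finset ℕ,
      A' A = A.filter (fun j => ¬ ((if j = n then 1 else j + 1) ∈ A)))
    (R : Finset ℕ → Fin ℓ → Finset ℕ)
    (hR1 : ∀ A i, R A i ⊆ A' A ∩ V i)
    (hR2 : ∀ A i, (R A i).card = (A' A ∩ V i).card - (V i).card / 2)
    (A'' : Finset ℕ → Finset ℕ)
    (hA'' : ∀ A : Finset ℕ, A'' A = A' A \ Finset.univ.biUnion (R A)) :
    (k : ℝ) ≤ (p - 17 * p ^ 2) * n ∧
    (p - 17 * p ^ 2) * n ≤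
      ∑ A ∈ (Finset.Icc 1 n).powerset,
        p ^ A.card * (1 - p) ^ (n - A.card) * ((A'' A).card : ℝ) :=
  stmt19_general n k ℓ hn hℓ V hV hV2 p hp A' hA' R hR2 A'' hA''
end
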